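/- arXiv:1504.05499 — 2 statements merged into one kernel-verified Lean document; each statement's English description precedes it below -/
import Mathlib

section
/- The Carlitz q-Bernoulli polynomials satisfy the addition formula β_{n,q}(x+y) = ∑_{l=0}^{n} C(n,l) q^{lx} [x]_q^{n-l} β_{l,q}(y) for all natural numbers (or reals, with real powers) x and y. -/
/-- The real `q`-analogue `[x]_q = (1 - q^x)/(1 - q)` using real powers. -/
noncomputable def qReal (q x : ℝ) : ℝ := (1 - q ^ x) / (1 - q)

/-- The Carlitz `q`-Bernoulli polynomial
`β_{n,q}(x) = ∑_{l=0}^n C(n,l) q^{lx} [x]_q^{n-l} β_l` (real `x`, real powers). -/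
noncomputable def qBernoulliPoly (q : ℝ) (β : ℕ → ℝ) (n : ℕ) (x : ℝ) : ℝ :=
  ∑ l ∈ Finset.range (n + 1), (n.choose l : ℝ) * q ^ ((l : ℝ) * x) * (qReal q x) ^ (n - l) * β l

/-!
Both sides are images of a power of a linear polynomial under the `ℝ`-linear "umbral"
functional `X ^ l ↦ β l`: `β_{n,q}(x)` is the image of `(q^x X + [x]_q)^n`. Since
`q^{x+y} X + [x+y]_q = q^x (q^y X + [y]_q) + [x]_q`, the binomial theorem and linearity give
the formula.
-/

open Polynomial Finset

section Umbral

variable {R : Type*} [CommSemiring R] (β : ℕ → R)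

noncomputable def umbralEval : R[X] →ₗ[R] R :=
  lsum fun l => LinearMap.mulRight R (β l)

lemma umbralEval_C_mul_X_pow (r : R) (l : ℕ) : umbralEval β (C r * X ^ l) = r * β l := by
  rw [C_mul_X_pow_eq_monomial, umbralEval, lsum_apply]
  exact sum_monomial_index _ _ (zero_mul _)

lemma umbralEval_C_mul_X_add_C_pow (a b : R) (n : ℕ) :
    umbralEval β ((C a * X + C b) ^ n) =
      ∑ l ∈ range (n + 1), (n.choose l : R) * a ^ l * b ^ (n - l) * β l := by
  rw [add_pow, map_sum]
  refine sum_congr rfl fun l _ => ?_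
  rw [show (C a * X) ^ l * C b ^ (n - l) * (n.choose l : R[X]) =
      C ((n.choose l : R) * a ^ l * b ^ (n - l)) * X ^ l by
      simp only [map_mul, map_pow, map_natCast]; ring,
    umbralEval_C_mul_X_pow]

lemma umbralEval_C_mul_X_add_C_pow_comp (a b c d : R) (n : ℕ) :
    umbralEval β ((C (a * c) * X + C (a * d + b)) ^ n) =
      ∑ m ∈ range (n + 1),
        (n.choose m : R) * a ^ m * b ^ (n - m) * umbralEval β ((C c * X + C d) ^ m) := by
  rw [show C (a * c) * X + C (a * d + b) = C a * (C c * X + C d) + C b by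
      simp only [map_mul, map_add]; ring,
    add_pow, map_sum]
  refine sum_congr rfl fun m _ => ?_
  rw [show (C a * (C c * X + C d)) ^ m * C b ^ (n - m) * (n.choose m : R[X]) =
      C ((n.choose m : R) * a ^ m * b ^ (n - m)) * (C c * X + C d) ^ m by
      rw [mul_pow]; simp only [map_mul, map_pow, map_natCast]; ring,
    ← smul_eq_C_mul, map_smul, smul_eq_mul]

end Umbral

lemma qReal_add {q : ℝ} (hq : 0 < q) (x y : ℝ) :
    qReal q (x + y) = q ^ x * qReal q y + qReal q x := by
  simp only [qReal, Real.rpow_add hq]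
  ring

lemma qBernoulliPoly_eq_umbralEval {q : ℝ} (hq : 0 < q) (β : ℕ → ℝ) (n : ℕ) (x : ℝ) :
    qBernoulliPoly q β n x = umbralEval β ((C (q ^ x) * X + C (qReal q x)) ^ n) := by
  rw [umbralEval_C_mul_X_add_C_pow, qBernoulliPoly]
  refine sum_congr rfl fun l _ => ?_
  rw [mul_comm (l : ℝ), Real.rpow_mul_natCast hq.le]

theorem qBernoulli_addition_general (q : ℝ) (hq : 0 < q)
    (β : ℕ → ℝ)
    (n : ℕ) (x y : ℝ) :
    qBernoulliPoly q β n (x + y) =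
      ∑ l ∈ Finset.range (n + 1),
        (n.choose l : ℝ) * q ^ ((l : ℝ) * x) * (qReal q x) ^ (n - l) * qBernoulliPoly q β l y := by
  rw [qBernoulliPoly_eq_umbralEval hq, Real.rpow_add hq, qReal_add hq,
    umbralEval_C_mul_X_add_C_pow_comp]
  refine sum_congr rfl fun l _ => ?_
  rw [qBernoulliPoly_eq_umbralEval hq, mul_comm (l : ℝ), Real.rpow_mul_natCast hq.le]

theorem qBernoulli_addition (q : ℝ) (hq : 0 < q) (hq1 : q ≠ 1)
    (β : ℕ → ℝ) (hβ0 : β 0 = 1)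
    (hrec : ∀ n : ℕ, 1 ≤ n →
      q * ∑ k ∈ Finset.range (n + 1), (n.choose k : ℝ) * q ^ k * β k - β n =
        if n = 1 then 1 else 0)
    (n : ℕ) (x y : ℝ) :
    qBernoulliPoly q β n (x + y) =
      ∑ l ∈ Finset.range (n + 1),
        (n.choose l : ℝ) * q ^ ((l : ℝ) * x) * (qReal q x) ^ (n - l) * qBernoulliPoly q β l y :=
  qBernoulli_addition_general q hq β n x y
end

section
/- As q → 1 (real q, 0 < q < 1), the Carlitz q-Bernoulli number β_{n,q} tends to the classical Bernoulli number B_n for every natural number n. -/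
/-- The Carlitz recurrence: `β 0 = 1` and
`q·∑_{k=0}^{n} C(n,k) q^k β k − β n = δ_{n,1}` for `n ≥ 1`. -/
def IsCarlitz (q : ℝ) (β : ℕ → ℝ) : Prop :=
  β 0 = 1 ∧ ∀ n : ℕ, 1 ≤ n →
    q * ∑ k ∈ Finset.range (n + 1), (n.choose k : ℝ) * q ^ k * β k - β n =
      if n = 1 then 1 else 0

/-!
With `t = q - 1` and `E_i(t) = [i+1]_q / (i+1) = ∑_d C(i,d) t^d / (d+1)`, Carlitz's explicit formula
`β_{k,q} = (1-q)^{-k} ∑_i (-1)^i C(k,i) (i+1)/[i+1]_q` reads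
`β_{k,q} = Δ^k (i ↦ 1/E_i(t)) (0) / t^k`.
It solves the recurrence, whose solution is unique. As a power series in `t`, the coefficient of
`t^d` in `1/E_i(t)` is a polynomial of degree `≤ d` in `i`, so the `k`-th forward difference kills
all powers below `t^k`: the explicit formula is a rational function of `t` with no pole at `t = 0`.
Its limits as `q → 1` then satisfy the recurrence at `q = 1`, which is the Bernoulli recurrence.
-/

open Polynomial Finset Filter Topology fwdDiff

section FiniteDifferences

variable {R : Type*} [CommRing R]

theorem fwdDiff_iter_apply_zero_eq_sum (f : ℕ → R) (n : ℕ) :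
    Δ_[1] ^[n] f 0 = ∑ k ∈ range (n + 1), (-1) ^ (n - k) * (n.choose k : R) * f k := by
  simp [fwdDiff_iter_eq_sum_shift, zsmul_eq_mul]

theorem fwdDiff_iter_eval_natCast_eq_zero {P : R[X]} {n : ℕ} (hP : P.natDegree < n) :
    Δ_[1] ^[n] (fun k : ℕ ↦ P.eval (k : R)) 0 = 0 := by
  have := congrFun (P.fwdDiff_iter_eq_zero_of_degree_lt hP) 0
  rw [fwdDiff_iter_eq_sum_shift] at this
  simpa [fwdDiff_iter_apply_zero_eq_sum, zsmul_eq_mul] using this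

/-- `(b + a Δ)^m = (a S + (b - a))^m`, with `S` the shift, applied to `f` at `0`. -/
theorem sum_choose_mul_pow_mul_fwdDiff_iter (f : ℕ → R) (a b : R) (m : ℕ) :
    ∑ k ∈ range (m + 1), (m.choose k : R) * a ^ k * b ^ (m - k) * Δ_[1] ^[k] f 0 =
      ∑ i ∈ range (m + 1), (m.choose i : R) * a ^ i * (b - a) ^ (m - i) * f i := by
  simp_rw [fwdDiff_iter_apply_zero_eq_sum, mul_sum]
  rw [sum_comm' (t' := range (m + 1)) (s' := fun i ↦ Ico i (m + 1)) (by
    intro k i; simp only [mem_range, mem_Ico]; omega)]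
  refine sum_congr rfl fun i hi ↦ ?_
  have him : i ≤ m := Nat.lt_succ_iff.mp (mem_range.mp hi)
  rw [sum_Ico_eq_sum_range, sub_eq_neg_add, add_pow, show m + 1 - i = m - i + 1 by omega,
    mul_sum, sum_mul]
  refine sum_congr rfl fun j hj ↦ ?_
  have hj : j ≤ m - i := Nat.lt_succ_iff.mp (mem_range.mp hj)
  have hchoose : (m.choose (i + j) : R) * ((i + j).choose i) = m.choose i * (m - i).choose j := by
    have := Nat.choose_mul (n := m) (Nat.le_add_right i j)
    rw [Nat.add_sub_cancel_left] at this
    rw [← Nat.cast_mul, ← Nat.cast_mul, this]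
  rw [show m - (i + j) = m - i - j by omega, Nat.add_sub_cancel_left, neg_pow, pow_add]
  linear_combination (a ^ i * a ^ j * b ^ (m - i - j) * (-1) ^ j * f i) * hchoose

theorem carlitz_relation_fwdDiff_iter_div_pow {K : Type*} [Field K] (w : ℕ → K) {q : K}
    (hq : q ≠ 1) (m : ℕ) :
    q * ∑ k ∈ range (m + 1), (m.choose k : K) * q ^ k * (Δ_[1] ^[k] w 0 / (q - 1) ^ k) -
        Δ_[1] ^[m] w 0 / (q - 1) ^ m =
      Δ_[1] ^[m] (fun i ↦ (q ^ (i + 1) - 1) * w i) 0 / (q - 1) ^ m := by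
  have ht : q - 1 ≠ 0 := sub_ne_zero.mpr hq
  have hterm : ∀ k ∈ range (m + 1), (m.choose k : K) * q ^ k * (Δ_[1] ^[k] w 0 / (q - 1) ^ k) =
      (m.choose k : K) * q ^ k * (q - 1) ^ (m - k) * Δ_[1] ^[k] w 0 / (q - 1) ^ m := by
    intro k hk
    rw [← pow_sub_mul_pow (q - 1) (Nat.lt_succ_iff.mp (mem_range.mp hk))]
    field_simp
  rw [sum_congr rfl hterm, ← sum_div, sum_choose_mul_pow_mul_fwdDiff_iter, mul_div_assoc',
    ← sub_div, fwdDiff_iter_apply_zero_eq_sum, fwdDiff_iter_apply_zero_eq_sum, mul_sum,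
    ← sum_sub_distrib,
    show q - 1 - q = -1 by ring]
  congr 1
  refine sum_congr rfl fun i _ ↦ ?_
  ring

end FiniteDifferences

theorem natDegree_coeff_invOfUnit_le {R : Type*} [CommRing R] {φ : PowerSeries R[X]}
    (hφ : ∀ d, (PowerSeries.coeff d φ).natDegree ≤ d) (d : ℕ) :
    (PowerSeries.coeff d (φ.invOfUnit 1)).natDegree ≤ d := by
  induction d using Nat.strong_induction_on with
  | _ d ih =>
    rw [PowerSeries.coeff_invOfUnit]
    split_ifs with hd
    · simp
    refine natDegree_mul_le.trans ?_
    simp only [inv_one, Units.val_one, natDegree_neg, natDegree_one, zero_add]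
    refine natDegree_sum_le_of_forall_le _ _ fun x hx ↦ ?_
    split_ifs with hx2
    · rw [← mem_antidiagonal.mp hx]
      exact natDegree_mul_le.trans (add_le_add (hφ x.1) (ih x.2 hx2))
    · simp

section QAverage

variable (K : Type*) [Field K]

/-- `qAvg K i` is `[i+1]_q / (i+1)` written as a polynomial in `t = q - 1`. -/
noncomputable def qAvg (i : ℕ) : K[X] :=
  ∑ d ∈ range (i + 1), C ((i.choose d : K) / (d + 1)) * X ^ d

/-- Its specialization at `X = i` is `qAvg K i`: the coefficient of `t ^ d` is `C(X, d) / (d + 1)`,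
a polynomial of degree `d` in `X`. -/
noncomputable def qAvgSeries : PowerSeries K[X] :=
  PowerSeries.mk fun d ↦ C ((d + 1).factorial : K)⁻¹ * descPochhammer K d

variable {K}

theorem coeff_qAvg (i d : ℕ) : (qAvg K i).coeff d = (i.choose d : K) / (d + 1) := by
  simp only [qAvg, finsetSum_coeff, coeff_C_mul, coeff_X_pow, mul_ite, mul_one, mul_zero,
    sum_ite_eq, mem_range]
  split_ifs with h
  · rfl
  · rw [Nat.choose_eq_zero_of_lt (by omega), Nat.cast_zero, zero_div]

theorem eval_qAvg_mul [CharZero K] (i : ℕ) (t : K) :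
    t * (i + 1) * (qAvg K i).eval t = (1 + t) ^ (i + 1) - 1 := by
  rw [add_comm 1 t, add_pow, sum_range_succ', qAvg, eval_finsetSum, mul_sum]
  simp only [one_pow, mul_one, Nat.choose_zero_right, Nat.cast_one, pow_zero, add_sub_cancel_right]
  refine sum_congr rfl fun d _ ↦ ?_
  have h : ((i : K) + 1) * i.choose d = (i + 1).choose (d + 1) * (d + 1) := by
    exact_mod_cast Nat.add_one_mul_choose_eq i d
  have hd : (d : K) + 1 ≠ 0 := Nat.cast_add_one_ne_zero d
  rw [eval_mul, eval_C, eval_pow, eval_X, pow_succ]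
  field_simp
  linear_combination t ^ d * t * h

@[simp]
theorem qAvg_zero : qAvg K 0 = 1 := by
  simp [qAvg]

theorem eval_qAvg_zero (i : ℕ) : (qAvg K i).eval 0 = 1 := by
  simp [← coeff_zero_eq_eval_zero, coeff_qAvg]

theorem constantCoeff_qAvgSeries : PowerSeries.constantCoeff (qAvgSeries K) = 1 := by
  simp [qAvgSeries]

theorem natDegree_coeff_qAvgSeries_le (d : ℕ) :
    (PowerSeries.coeff d (qAvgSeries K)).natDegree ≤ d := by
  rw [qAvgSeries, PowerSeries.coeff_mk]
  exact natDegree_C_mul_le _ _ |>.trans (descPochhammer_natDegree K d).le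

theorem map_eval_qAvgSeries [CharZero K] (i : ℕ) :
    PowerSeries.map (evalRingHom (i : K)) (qAvgSeries K) = (qAvg K i : PowerSeries K) := by
  ext d
  rw [PowerSeries.coeff_map, coeff_coe, coeff_qAvg, qAvgSeries, PowerSeries.coeff_mk,
    coe_evalRingHom, eval_mul, eval_C, descPochhammer_eval_eq_descFactorial,
    Nat.descFactorial_eq_factorial_mul_choose, Nat.factorial_succ]
  push_cast
  have : (d.factorial : K) ≠ 0 := by exact_mod_cast d.factorial_ne_zero
  field_simp

end QAverage

section Numerator

variable {K : Type*} [Field K] [CharZero K]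

variable (K) in
/-- The numerator of `Δ^k (i ↦ 1 / qAvg K i) (0)` over the denominator `∏_{j ≤ k} qAvg K j`. -/
noncomputable def carlitzNumerator (k : ℕ) : K[X] :=
  ∑ i ∈ range (k + 1),
    C ((-1) ^ (k - i) * (k.choose i : K)) * ∏ j ∈ (range (k + 1)).erase i, qAvg K j

theorem X_pow_dvd_carlitzNumerator (k : ℕ) : X ^ k ∣ carlitzNumerator K k := by
  set ψ := (qAvgSeries K).invOfUnit 1
  set inv : ℕ → PowerSeries K := fun i ↦ PowerSeries.map (evalRingHom (i : K)) ψ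
  have hinv (i : ℕ) : (qAvg K i : PowerSeries K) * inv i = 1 := by
    rw [← map_eval_qAvgSeries, ← map_mul,
      PowerSeries.mul_invOfUnit _ _ (by simp [constantCoeff_qAvgSeries]), map_one]
  set S := ∑ i ∈ range (k + 1), PowerSeries.C ((-1) ^ (k - i) * (k.choose i : K)) * inv i
  have hS : PowerSeries.X ^ k ∣ S := by
    refine PowerSeries.X_pow_dvd_iff.mpr fun d hd ↦ ?_
    simp only [S, map_sum, PowerSeries.coeff_C_mul, inv, PowerSeries.coeff_map, coe_evalRingHom]
    rw [← fwdDiff_iter_apply_zero_eq_sum (fun i ↦ (PowerSeries.coeff d ψ).eval (i : K))]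
    exact fwdDiff_iter_eval_natCast_eq_zero
      ((natDegree_coeff_invOfUnit_le natDegree_coeff_qAvgSeries_le d).trans_lt hd)
  have hcoe : (carlitzNumerator K k : PowerSeries K) =
      ((∏ j ∈ range (k + 1), qAvg K j : K[X]) : PowerSeries K) * S := by
    have hprod (s : Finset ℕ) :
        ((∏ j ∈ s, qAvg K j : K[X]) : PowerSeries K) = ∏ j ∈ s, (qAvg K j : PowerSeries K) :=
      map_prod coeToPowerSeries.ringHom _ s
    rw [carlitzNumerator, ← coeToPowerSeries.ringHom_apply, map_sum, mul_sum]
    refine sum_congr rfl fun i hi ↦ ?_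
    rw [coeToPowerSeries.ringHom_apply, Polynomial.coe_mul, coe_C, hprod, hprod,
      ← mul_prod_erase _ _ hi]
    linear_combination (PowerSeries.C ((-1) ^ (k - i) * (k.choose i : K)) *
      ∏ j ∈ (range (k + 1)).erase i, (qAvg K j : PowerSeries K)) * (hinv i).symm
  refine X_pow_dvd_iff.mpr fun d hd ↦ ?_
  rw [← coeff_coe, hcoe]
  exact PowerSeries.X_pow_dvd_iff.mp (dvd_mul_of_dvd_right hS _) d hd

theorem prod_mul_fwdDiff_iter_eq_eval_carlitzNumerator (k : ℕ) {t : K}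
    (ht : ∀ j ∈ range (k + 1), (qAvg K j).eval t ≠ 0) :
    (∏ j ∈ range (k + 1), (qAvg K j).eval t) * Δ_[1] ^[k] (fun i ↦ ((qAvg K i).eval t)⁻¹) 0 =
      (carlitzNumerator K k).eval t := by
  rw [fwdDiff_iter_apply_zero_eq_sum, mul_sum, carlitzNumerator, eval_finsetSum]
  refine sum_congr rfl fun i hi ↦ ?_
  rw [eval_mul, eval_C, eval_prod, ← mul_prod_erase _ _ hi]
  field_simp [ht i hi]

end Numerator

/-- Carlitz's explicit formula `β_{k,q} = (1-q)^{-k} ∑_i (-1)^i C(k,i) (i+1)/[i+1]_q`. -/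
noncomputable def carlitzExplicit (q : ℝ) (k : ℕ) : ℝ :=
  Δ_[1] ^[k] (fun i ↦ ((qAvg ℝ i).eval (q - 1))⁻¹) 0 / (q - 1) ^ k

theorem eval_qAvg_ne_zero {q : ℝ} (hq : ∀ n, q ^ (n + 1) ≠ 1) (i : ℕ) :
    (qAvg ℝ i).eval (q - 1) ≠ 0 := by
  intro h
  have := eval_qAvg_mul i (q - 1)
  rw [h, mul_zero, add_sub_cancel, eq_comm, sub_eq_zero] at this
  exact hq i this

theorem isCarlitz_carlitzExplicit {q : ℝ} (hq : ∀ n, q ^ (n + 1) ≠ 1) :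
    IsCarlitz q (carlitzExplicit q) := by
  have hq1 : q ≠ 1 := by simpa using hq 0
  refine ⟨by simp [carlitzExplicit], fun m hm ↦ ?_⟩
  have hv : (fun i : ℕ ↦ (q ^ (i + 1) - 1) * ((qAvg ℝ i).eval (q - 1))⁻¹) =
      fun i : ℕ ↦ (C (q - 1) * (X + 1)).eval (i : ℝ) := by
    ext i
    have h := eval_qAvg_mul i (q - 1)
    rw [add_sub_cancel] at h
    rw [← h]
    field_simp [eval_qAvg_ne_zero hq i]
    simp
  simp only [carlitzExplicit]
  rw [carlitz_relation_fwdDiff_iter_div_pow _ hq1, hv]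
  obtain rfl | hm2 : m = 1 ∨ 1 < m := by omega
  · field_simp [sub_ne_zero.mpr hq1]
    simp [fwdDiff]
    ring
  · rw [fwdDiff_iter_eval_natCast_eq_zero, zero_div, if_neg hm2.ne']
    exact (natDegree_C_mul_le _ _).trans_lt (by rwa [← C_1, natDegree_X_add_C])

theorem exists_tendsto_carlitzExplicit (k : ℕ) :
    ∃ L, Tendsto (carlitzExplicit · k) (𝓝[≠] 1) (𝓝 L) := by
  obtain ⟨H, hH⟩ := X_pow_dvd_carlitzNumerator (K := ℝ) k
  set D : ℝ → ℝ := fun q ↦ ∏ j ∈ range (k + 1), (qAvg ℝ j).eval (q - 1)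
  have hD : Continuous D := by fun_prop
  have hD1 : D 1 ≠ 0 := by simp [D, eval_qAvg_zero]
  have hcont : ContinuousAt (fun q ↦ H.eval (q - 1) / D q) 1 :=
    ((H.continuous.comp (continuous_sub_right 1)).continuousAt).div hD.continuousAt hD1
  refine ⟨_, (hcont.tendsto.mono_left nhdsWithin_le_nhds).congr' ?_⟩
  filter_upwards [self_mem_nhdsWithin, nhdsWithin_le_nhds (hD.continuousAt.eventually_ne hD1)]
    with q hq1 hDq
  have hE : ∀ j ∈ range (k + 1), (qAvg ℝ j).eval (q - 1) ≠ 0 := prod_ne_zero_iff.mp hDq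
  have hN := prod_mul_fwdDiff_iter_eq_eval_carlitzNumerator k hE
  rw [hH, eval_mul, eval_pow, eval_X] at hN
  have ht : (q - 1) ^ k ≠ 0 := pow_ne_zero _ (sub_ne_zero.mpr hq1)
  rw [carlitzExplicit, div_eq_div_iff hDq ht, mul_comm, ← hN]
  ring

theorem IsCarlitz.unique {q : ℝ} (hq : ∀ n, q ^ (n + 1) ≠ 1) {b c : ℕ → ℝ} (hb : IsCarlitz q b)
    (hc : IsCarlitz q c) : b = c := by
  funext n
  induction n using Nat.strong_induction_on with
  | _ n ih =>
    rcases n with _ | n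
    · rw [hb.1, hc.1]
    have hbn := hb.2 (n + 1) n.succ_pos
    have hcn := hc.2 (n + 1) n.succ_pos
    have hlower : ∑ k ∈ range (n + 1), ((n + 1).choose k : ℝ) * q ^ k * b k =
        ∑ k ∈ range (n + 1), ((n + 1).choose k : ℝ) * q ^ k * c k :=
      sum_congr rfl fun k hk ↦ by rw [ih k (mem_range.mp hk)]
    rw [sum_range_succ, Nat.choose_self] at hbn hcn
    have hlead : q ^ (n + 2) - 1 ≠ 0 := sub_ne_zero.mpr (hq (n + 1))
    apply mul_left_cancel₀ hlead
    linear_combination hbn - hcn - q * hlower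

theorem IsCarlitz.of_tendsto {l : Filter ℝ} [l.NeBot] {q₀ : ℝ} (hl : l ≤ 𝓝 q₀) {b : ℝ → ℕ → ℝ}
    (hb : ∀ᶠ q in l, IsCarlitz q (b q)) {L : ℕ → ℝ} (hL : ∀ k, Tendsto (b · k) l (𝓝 (L k))) :
    IsCarlitz q₀ L := by
  have hq : Tendsto (fun q ↦ q) l (𝓝 q₀) := tendsto_id.mono_left hl
  refine ⟨tendsto_nhds_unique (hL 0) (tendsto_const_nhds.congr' (hb.mono fun q h ↦ h.1.symm)),
    fun n hn ↦ tendsto_nhds_unique ?_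
      (tendsto_const_nhds.congr' (hb.mono fun q h ↦ (h.2 n hn).symm))⟩
  exact (hq.mul (tendsto_finsetSum _ fun k _ ↦ (tendsto_const_nhds.mul (hq.pow k)).mul (hL k))).sub
    (hL n)

theorem IsCarlitz.sum_range_choose_succ_mul {b : ℕ → ℝ} (h : IsCarlitz 1 b) (n : ℕ) :
    ∑ k ∈ range (n + 1), ((n + 1).choose k : ℝ) * b k = if n = 0 then 1 else 0 := by
  have := h.2 (n + 1) n.succ_pos
  rw [sum_range_succ, Nat.choose_self] at this
  simpa using this

theorem eq_of_forall_sum_range_choose_succ_mul_eq {K : Type*} [Field K] [CharZero K] {b c : ℕ → K}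
    (h : ∀ n, ∑ k ∈ range (n + 1), ((n + 1).choose k : K) * b k =
      ∑ k ∈ range (n + 1), ((n + 1).choose k : K) * c k) : b = c := by
  funext n
  induction n using Nat.strong_induction_on with
  | _ n ih =>
    have hn := h n
    rw [sum_range_succ, sum_range_succ, sum_congr rfl fun k hk ↦ by rw [ih k (mem_range.mp hk)],
      Nat.choose_succ_self_right] at hn
    exact mul_left_cancel₀ (Nat.cast_ne_zero.mpr n.succ_ne_zero) (add_left_cancel hn)

theorem carlitz_tendsto_bernoulli
    (β : ℝ → ℕ → ℝ) (hβ : ∀ q : ℝ, 0 < q → q < 1 → IsCarlitz q (β q))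
    (B : ℕ → ℝ) (hB0 : B 0 = 1)
    (hBrec : ∀ n : ℕ, 1 ≤ n → ∑ k ∈ Finset.range (n + 1), ((n + 1).choose k : ℝ) * B k = 0)
    (n : ℕ) :
    Filter.Tendsto (fun q : ℝ => β q n) (nhdsWithin 1 (Set.Ioo (0 : ℝ) 1)) (nhds (B n)) := by
  have hpow : ∀ q ∈ Set.Ioo (0 : ℝ) 1, ∀ m, q ^ (m + 1) ≠ 1 :=
    fun q hq m ↦ (pow_lt_one₀ hq.1.le hq.2 m.succ_ne_zero).ne
  have hexplicit : ∀ᶠ q in 𝓝[Set.Ioo 0 1] 1, carlitzExplicit q = β q :=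
    eventually_nhdsWithin_of_forall fun q hq ↦
      (isCarlitz_carlitzExplicit (hpow q hq)).unique (hpow q hq) (hβ q hq.1 hq.2)
  choose L hL using fun k ↦ exists_tendsto_carlitzExplicit k
  have hβL (k : ℕ) : Tendsto (β · k) (𝓝[Set.Ioo 0 1] 1) (𝓝 (L k)) :=
    ((hL k).mono_left (nhdsWithin_mono _ fun q hq ↦ hq.2.ne)).congr'
      (hexplicit.mono fun q hq ↦ congrFun hq k)
  have : (𝓝[Set.Ioo (0 : ℝ) 1] 1).NeBot := by
    rw [nhdsWithin_Ioo_eq_nhdsLT one_pos]; infer_instance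
  have hL1 : IsCarlitz 1 L :=
    .of_tendsto nhdsWithin_le_nhds (eventually_nhdsWithin_of_forall fun q hq ↦ hβ q hq.1 hq.2) hβL
  have hLB : L = B := eq_of_forall_sum_range_choose_succ_mul_eq fun m ↦ by
    rw [hL1.sum_range_choose_succ_mul]
    rcases m with _ | m
    · simp [hB0]
    · rw [hBrec _ m.succ_pos, if_neg m.succ_ne_zero]
  exact hLB ▸ hβL n
end
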